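/- arXiv:1712.04587 — 2 statements merged into one kernel-verified Lean document; each statement's English description precedes it below -/
import Mathlib

section
/- Let A be an artin algebra and 0 → N → M → L → 0 a short exact sequence of finitely generated A-modules. If N and L are Gorenstein-projective, then M is Gorenstein-projective. -/
universe u

open Function LinearMap

/-- An unbounded cochain complex of `A`-modules, given by plain data. -/
structure ZComplex (A : Type u) [Ring A] where
  P : ℤ → ModuleCat.{u} A
  d : ∀ n : ℤ, P n →ₗ[A] P (n + 1)
  comp_eq_zero : ∀ (n : ℤ) (x : P n), d (n + 1) (d n x) = 0

namespace ZComplex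

variable {A : Type u} [Ring A]

/-- All terms are projective. -/
def IsProj (C : ZComplex A) : Prop := ∀ n, Module.Projective A (C.P n)

/-- All terms are finitely generated. -/
def IsFG (C : ZComplex A) : Prop := ∀ n, Module.Finite A (C.P n)

/-- The complex is exact (acyclic). -/
def Acyclic (C : ZComplex A) : Prop := ∀ n : ℤ, Function.Exact (C.d n) (C.d (n + 1))

/-- The complex `Hom_A(C, A)` is exact. -/
def DualAcyclic (C : ZComplex A) : Prop :=
  ∀ n : ℤ, Function.Exact
    (fun g : C.P (n + 1 + 1) →ₗ[A] A => g ∘ₗ C.d (n + 1))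
    (fun f : C.P (n + 1) →ₗ[A] A => f ∘ₗ C.d n)

end ZComplex

variable (A : Type u) [Ring A]

/-- A finitely generated module is Gorenstein-projective if it is the zeroth cocycle
of a totally acyclic complex of finitely generated projective modules. -/
def IsGProj (M : Type u) [AddCommGroup M] [Module A M] : Prop :=
  ∃ C : ZComplex A, C.IsProj ∧ C.IsFG ∧ C.Acyclic ∧ C.DualAcyclic ∧
    Nonempty (↥(LinearMap.ker (C.d 0)) ≃ₗ[A] M)

/-- An augmented projective resolution `⋯ → Q 2 → Q 1 → Q 0 ≅ M → 0`.
Here `Q (n+1)` is the `n`-th term of the resolution proper. -/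
structure AugProjRes (M : Type u) [AddCommGroup M] [Module A M] where
  Q : ℕ → ModuleCat.{u} A
  d : ∀ n : ℕ, Q (n + 1) →ₗ[A] Q n
  iso : ↥(Q 0) ≃ₗ[A] M
  proj : ∀ n, Module.Projective A (Q (n + 1))
  surj : Function.Surjective (d 0)
  exact : ∀ n, Function.Exact (d (n + 1)) (d n)

/-- `Ext_A^i(M, N) = 0`, expressed (for `i ≥ 1`) as exactness of the `Hom` complex of any
projective resolution of `M` at the `i`-th spot. -/
def ExtVanish (M : Type u) [AddCommGroup M] [Module A M]
    (N : Type u) [AddCommGroup N] [Module A N] (i : ℕ) : Prop :=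
  ∀ R : AugProjRes A M,
    Function.Exact
      (fun g : R.Q i →ₗ[A] N => g ∘ₗ R.d i)
      (fun g : R.Q (i + 1) →ₗ[A] N => g ∘ₗ R.d (i + 1))

/-- `M` has projective dimension at most `n`. -/
def ProjDimLE (M : Type u) [AddCommGroup M] [Module A M] (n : ℕ) : Prop :=
  ∃ R : AugProjRes A M, ∀ k : ℕ, n + 1 < k → ∀ x : R.Q k, x = 0

/-- `M` has finite projective dimension. -/
def HasFiniteProjDim (M : Type u) [AddCommGroup M] [Module A M] : Prop :=
  ∃ n : ℕ, ProjDimLE A M n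

/-- An augmented injective coresolution `0 → M ≅ Q 0 → Q 1 → Q 2 → ⋯`. -/
structure AugInjRes (M : Type u) [AddCommGroup M] [Module A M] where
  Q : ℕ → ModuleCat.{u} A
  d : ∀ n : ℕ, Q n →ₗ[A] Q (n + 1)
  iso : M ≃ₗ[A] ↥(Q 0)
  injQ : ∀ n, Module.Injective A (Q (n + 1))
  mono : Function.Injective (d 0)
  exact : ∀ n, Function.Exact (d n) (d (n + 1))

/-- `M` has injective dimension at most `n`. -/
def InjDimLE (M : Type u) [AddCommGroup M] [Module A M] (n : ℕ) : Prop :=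
  ∃ R : AugInjRes A M, ∀ k : ℕ, n + 1 < k → ∀ x : R.Q k, x = 0

/-- A (not necessarily finitely generated) module is Gorenstein-projective if it is the zeroth
cocycle of an acyclic complex of projectives which stays acyclic after applying
`Hom_A(-, Q)` for every projective `Q`. -/
def IsGProjLarge (M : Type u) [AddCommGroup M] [Module A M] : Prop :=
  ∃ C : ZComplex A, C.IsProj ∧ C.Acyclic ∧
    (∀ (Q : Type u) [AddCommGroup Q] [Module A Q], Module.Projective A Q →
      ∀ n : ℤ, Function.Exact
        (fun g : C.P (n + 1 + 1) →ₗ[A] Q => g ∘ₗ C.d (n + 1))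
        (fun f : C.P (n + 1) →ₗ[A] Q => f ∘ₗ C.d n)) ∧
    Nonempty (↥(LinearMap.ker (C.d 0)) ≃ₗ[A] M)

/-- The evaluation map `M → Hom_{Aᵒᵖ}(Hom_A(M, A), A)`. -/
noncomputable def evalMap (M : Type u) [AddCommGroup M] [Module A M] :
    M →ₗ[A] ((M →ₗ[A] A) →ₗ[Aᵐᵒᵖ] A) where
  toFun m :=
    { toFun := fun f => f m
      map_add' := fun f g => rfl
      map_smul' := fun a f => rfl }
  map_add' m m' := by ext f; exact map_add f m m'
  map_smul' a m := by ext f; exact map_smul f a m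

/-! Horseshoe lemma for complete resolutions. Let `C` and `D` be totally acyclic complexes of
finitely generated projectives with zeroth cocycles `N` and `L`. The complex `C ⊕ D` with
differential `(x, y) ↦ (d x + δ y, d y)` is again totally acyclic whenever the maps
`δ n : D n → C (n + 1)` anticommute with the differentials, and it has `M` as zeroth cocycle once
`δ 0` is chosen compatibly with `0 → N → M → L → 0`. Since a finitely generated projective is a
summand of some `Aⁿ`, dual acyclicity of `D` gives `Ext¹(L, Q) = 0` and more generally lets maps
into such `Q` extend along the differentials of `D`; this produces `δ 0` and the `δ n` for
`n > 0`, while the `δ n` for `n < 0` are lifted through the acyclic `C` using projectivity of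
`D`. -/

theorem Int.exists_seq_of_extend_up_down {X : ℤ → Type*} (P : ∀ n, X n → Prop)
    (R : ∀ n, X n → X (n + 1) → Prop) (x₀ : X 0) (hx₀ : P 0 x₀)
    (up : ∀ n x, P n x → ∃ y, P (n + 1) y ∧ R n x y)
    (down : ∀ n y, P (n + 1) y → ∃ x, P n x ∧ R n x y) :
    ∃ x : ∀ n, X n, x 0 = x₀ ∧ ∀ n, R n (x n) (x (n + 1)) := by
  choose up' hup using up
  choose down' hdown using down
  let u : ∀ k : ℕ, {x : X k // P k x} := fun k =>
    Nat.rec ⟨x₀, hx₀⟩ (fun k x => ⟨up' k x.1 x.2, (hup k x.1 x.2).1⟩) k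
  let w : ∀ j : ℕ, {x : X (Int.negSucc j) // P _ x} := fun j =>
    Nat.rec ⟨down' (Int.negSucc 0) x₀ hx₀, (hdown _ _ _).1⟩
      (fun j x => ⟨down' (Int.negSucc (j + 1)) x.1 x.2, (hdown _ _ _).1⟩) j
  refine ⟨fun n => match n with | .ofNat k => (u k).1 | .negSucc j => (w j).1, rfl, ?_⟩
  rintro (k | _ | j)
  · exact (hup _ _ _).2
  · exact (hdown _ _ _).2
  · exact (hdown _ _ _).2

namespace LinearMap

variable {R M N P : Type*} [Ring R] [AddCommGroup M] [Module R M] [AddCommGroup N] [Module R N]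
  [AddCommGroup P] [Module R P]

theorem exists_comp_eq_of_surjective {u : M →ₗ[R] N} (hu : Surjective u) (φ : M →ₗ[R] P)
    (h : ker u ≤ ker φ) : ∃ ψ : N →ₗ[R] P, ψ ∘ₗ u = φ :=
  ⟨(ker u).liftQ φ h ∘ₗ (u.quotKerEquivOfSurjective hu).symm.toLinearMap, by
    ext x
    simp⟩

end LinearMap

namespace Function.Exact

variable {R N M L P' P Q : Type*} [Ring R] [AddCommGroup N] [Module R N] [AddCommGroup M]
  [Module R M] [AddCommGroup L] [Module R L] [AddCommGroup P'] [Module R P'] [AddCommGroup P]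
  [Module R P] [AddCommGroup Q] [Module R Q]

/-- `Ext¹(L, Q) = 0`, read off a projective presentation `P' → P → L → 0`. -/
theorem exists_comp_eq_of_presentation {f : N →ₗ[R] M} {g : M →ₗ[R] L} (hfg : Exact f g)
    (hf : Injective f) (hg : Surjective g) [Module.Projective R P] {d : P' →ₗ[R] P}
    {p : P →ₗ[R] L} (hp : Surjective p) (hdp : Exact d p)
    (hQ : ∀ β : P' →ₗ[R] Q, ker d ≤ ker β → ∃ γ : P →ₗ[R] Q, γ ∘ₗ d = β) (h : N →ₗ[R] Q) :
    ∃ σ : M →ₗ[R] Q, σ ∘ₗ f = h := by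
  obtain ⟨v, hv⟩ := Module.projective_lifting_property g p hg
  have hgv : ∀ x, g (v x) = p x := LinearMap.congr_fun hv
  have hvd : ∀ x, v (d x) ∈ range f := fun x =>
    (hfg _).1 (by rw [hgv, hdp.apply_apply_eq_zero])
  let w : P' →ₗ[R] N := (LinearEquiv.ofInjective f hf).symm.toLinearMap ∘ₗ
    (v ∘ₗ d).codRestrict (range f) hvd
  have hfw : ∀ x, f (w x) = v (d x) := fun x =>
    congrArg Subtype.val ((LinearEquiv.ofInjective f hf).apply_symm_apply ⟨_, hvd x⟩)
  obtain ⟨γ, hγ⟩ := hQ (h ∘ₗ w) fun x hx => by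
    have : w x = 0 := hf (by rw [hfw, LinearMap.mem_ker.1 hx, map_zero, map_zero])
    simp [this]
  -- `M` is the quotient of `P × N` by the pairs `(x, n)` with `v x + f n = 0`.
  have hu : Surjective (v.coprod f) := fun m => by
    obtain ⟨x, hx⟩ := hp (g m)
    obtain ⟨n, hn⟩ := (hfg (m - v x)).1 (by rw [map_sub, hgv, hx, sub_self])
    exact ⟨(x, n), by simp [hn]⟩
  obtain ⟨σ, hσ⟩ := LinearMap.exists_comp_eq_of_surjective hu (γ.coprod h) fun ⟨x, n⟩ hxn => by
    replace hxn : v x + f n = 0 := hxn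
    obtain ⟨z, rfl⟩ := (hdp x).1 (by
      rw [← hgv, eq_neg_of_add_eq_zero_left hxn, map_neg, hfg.apply_apply_eq_zero, neg_zero])
    have hn : n = -w z := hf (by rw [map_neg, hfw, eq_neg_of_add_eq_zero_right hxn])
    have hγz : γ (d z) = h (w z) := LinearMap.congr_fun hγ z
    simp [hn, hγz]
  exact ⟨σ, by ext n; simpa using LinearMap.congr_fun hσ (0, n)⟩

end Function.Exact

namespace ZComplex

variable {A}
variable {C D : ZComplex A}

theorem acyclic_of_forall_exists (h : ∀ n y, C.d (n + 1) y = 0 → ∃ x, C.d n x = y) :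
    C.Acyclic :=
  fun n y => ⟨h n y, by rintro ⟨x, rfl⟩; exact C.comp_eq_zero n x⟩

theorem dualAcyclic_of_forall_exists
    (h : ∀ n (F : C.P (n + 1) →ₗ[A] A), F ∘ₗ C.d n = 0 → ∃ G, G ∘ₗ C.d (n + 1) = F) :
    C.DualAcyclic :=
  fun n F => ⟨h n F, by
    rintro ⟨G, rfl⟩
    ext x
    simp [C.comp_eq_zero]⟩

def toCycles (C : ZComplex A) (n : ℤ) : C.P n →ₗ[A] ker (C.d (n + 1)) :=
  (C.d n).codRestrict _ (C.comp_eq_zero n)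

@[simp]
theorem coe_toCycles (n : ℤ) (x : C.P n) : (C.toCycles n x : C.P (n + 1)) = C.d n x := rfl

theorem Acyclic.surjective_toCycles (hC : C.Acyclic) (n : ℤ) : Surjective (C.toCycles n) := by
  rintro ⟨y, hy⟩
  obtain ⟨x, rfl⟩ := (hC n y).1 hy
  exact ⟨x, rfl⟩

theorem Acyclic.exact_toCycles (hC : C.Acyclic) (n : ℤ) :
    Exact (C.d n) (C.toCycles (n + 1)) := fun y =>
  (Subtype.ext_iff.trans (by rfl)).trans (hC n y)

theorem Acyclic.exists_d_comp_eq (hC : C.Acyclic) {P : Type u} [AddCommGroup P] [Module A P]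
    [Module.Projective A P] {n : ℤ} (β : P →ₗ[A] C.P (n + 1)) (hβ : C.d (n + 1) ∘ₗ β = 0) :
    ∃ l : P →ₗ[A] C.P n, C.d n ∘ₗ l = β := by
  have hmem : ∀ x, β x ∈ range (C.d n) := fun x => (hC n (β x)).1 (LinearMap.congr_fun hβ x)
  obtain ⟨l, hl⟩ := Module.projective_lifting_property (C.d n).rangeRestrict
    (β.codRestrict _ hmem) (C.d n).surjective_rangeRestrict
  exact ⟨l, by ext x; exact congrArg Subtype.val (LinearMap.congr_fun hl x)⟩

theorem DualAcyclic.exists_comp_d_eq (hD : D.DualAcyclic) {Q : Type u} [AddCommGroup Q]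
    [Module A Q] [Module.Finite A Q] [Module.Projective A Q] {n : ℤ} (β : D.P n →ₗ[A] Q)
    (hβ : ker (D.d n) ≤ ker β) : ∃ γ : D.P (n + 1) →ₗ[A] Q, γ ∘ₗ D.d n = β := by
  obtain ⟨m, rfl⟩ : ∃ m, n = m + 1 := ⟨n - 1, by ring⟩
  have into_ring : ∀ β' : D.P (m + 1) →ₗ[A] A, ker (D.d (m + 1)) ≤ ker β' →
      ∃ γ : D.P (m + 1 + 1) →ₗ[A] A, γ ∘ₗ D.d (m + 1) = β' := fun β' hβ' =>
    (hD m β').1 (by ext x; exact hβ' (D.comp_eq_zero m x))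
  -- `Q` is a retract of a finite free module, on which lifting is coordinatewise.
  obtain ⟨k, r, hr⟩ := Module.Finite.exists_fin' A Q
  obtain ⟨s, hs⟩ := Module.projective_lifting_property r LinearMap.id hr
  choose γ hγ using fun i : Fin k => into_ring (proj i ∘ₗ s ∘ₗ β)
    (fun x hx => by simp [LinearMap.mem_ker.1 (hβ hx)])
  refine ⟨r ∘ₗ pi γ, ?_⟩
  ext x
  have hsx : pi γ (D.d (m + 1) x) = s (β x) := funext fun i => LinearMap.congr_fun (hγ i) x
  simpa [hsx] using LinearMap.congr_fun hs (β x)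

structure Twisting (C D : ZComplex A) where
  δ : ∀ n, D.P n →ₗ[A] C.P (n + 1)
  d_δ_add_δ_d : ∀ n y, C.d (n + 1) (δ n y) + δ (n + 1) (D.d n y) = 0

namespace Twisting

variable (t : Twisting C D)

abbrev total : ZComplex A where
  P n := ModuleCat.of A (C.P n × D.P n)
  d n := (C.d n ∘ₗ fst A _ _ + t.δ n ∘ₗ snd A _ _).prod (D.d n ∘ₗ snd A _ _)
  comp_eq_zero n z := Prod.ext (by simp [C.comp_eq_zero, t.d_δ_add_δ_d]) (D.comp_eq_zero n z.2)

theorem total_isProj (hC : C.IsProj) (hD : D.IsProj) : t.total.IsProj := fun n =>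
  have := hC n; have := hD n; inferInstanceAs (Module.Projective A (C.P n × D.P n))

theorem total_isFG (hC : C.IsFG) (hD : D.IsFG) : t.total.IsFG := fun n =>
  have := hC n; have := hD n; inferInstanceAs (Module.Finite A (C.P n × D.P n))

theorem total_acyclic (hC : C.Acyclic) (hD : D.Acyclic) : t.total.Acyclic := by
  refine acyclic_of_forall_exists fun n z hz => ?_
  have hx : C.d (n + 1) z.1 + t.δ (n + 1) z.2 = 0 := congrArg Prod.fst hz
  obtain ⟨y, hy⟩ := (hD n z.2).1 (congrArg Prod.snd hz)
  have hδy := t.d_δ_add_δ_d n y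
  rw [hy] at hδy
  have hxy : C.d (n + 1) (z.1 - t.δ n y) = 0 := by
    rw [map_sub, eq_neg_of_add_eq_zero_left hx, eq_neg_of_add_eq_zero_left hδy, sub_self]
  obtain ⟨x, hx'⟩ := (hC n _).1 hxy
  refine ⟨(x, y), Prod.ext ?_ hy⟩
  change C.d n x + t.δ n y = z.1
  rw [hx', sub_add_cancel]

theorem total_dualAcyclic (hC : C.DualAcyclic) (hD : D.DualAcyclic) : t.total.DualAcyclic := by
  refine dualAcyclic_of_forall_exists fun n F hF => ?_
  let FC : C.P (n + 1) →ₗ[A] A := F ∘ₗ inl A _ (D.P (n + 1))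
  let FD : D.P (n + 1) →ₗ[A] A := F ∘ₗ inr A (C.P (n + 1)) _
  have hF_inl : ∀ x, FC (C.d n x) = 0 := fun x => by
    simpa [FC] using LinearMap.congr_fun hF (inl A _ (D.P n) x)
  have hF_inr : ∀ y, FC (t.δ n y) + FD (D.d n y) = 0 := fun y => by
    simpa [FC, FD, ← map_add] using LinearMap.congr_fun hF (inr A (C.P n) _ y)
  obtain ⟨HC, hHC⟩ := (hC n FC).1 (by ext x; exact hF_inl x)
  have hHC' : ∀ x, HC (C.d (n + 1) x) = FC x := LinearMap.congr_fun hHC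
  obtain ⟨HD, hHD⟩ := (hD n (FD - HC ∘ₗ t.δ (n + 1))).1 (by
    ext y
    have hδ := eq_neg_of_add_eq_zero_right (t.d_δ_add_δ_d n y)
    simp only [LinearMap.comp_apply, LinearMap.sub_apply, hδ, map_neg, hHC', sub_neg_eq_add,
      LinearMap.zero_apply]
    rw [add_comm, hF_inr])
  have hHD' : ∀ y, HD (D.d (n + 1) y) = FD y - HC (t.δ (n + 1) y) := LinearMap.congr_fun hHD
  refine ⟨HC ∘ₗ fst A _ _ + HD ∘ₗ snd A _ _, ?_⟩
  ext z
  · simpa [FC] using hHC' z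
  · simp [hHD', FD]

theorem nonempty_ker_total_d_zero_equiv {M : Type u} [AddCommGroup M] [Module A M]
    {f : ker (C.d 0) →ₗ[A] M} {g : M →ₗ[A] ker (D.d 0)} (hg : Surjective g) (hfg : Exact f g)
    (σ : M →ₗ[A] C.P 0) (hσ : ∀ z, σ (f z) = z)
    (hσδ : ∀ m, C.d 0 (σ m) + t.δ 0 (g m) = 0) :
    Nonempty (ker (t.total.d 0) ≃ₗ[A] M) := by
  let θ : M →ₗ[A] ker (t.total.d 0) :=
    (σ.prod ((ker (D.d 0)).subtype ∘ₗ g)).codRestrict _ fun m =>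
      Prod.ext (hσδ m) (g m).2
  refine ⟨(LinearEquiv.ofBijective θ ⟨?_, ?_⟩).symm⟩
  · refine (injective_iff_map_eq_zero θ).2 fun m hm => ?_
    have hσm : σ m = 0 := congrArg (fun w : ker (t.total.d 0) => (w : t.total.P 0).1) hm
    have hgm : (g m : D.P 0) = 0 := congrArg (fun w : ker (t.total.d 0) => (w : t.total.P 0).2) hm
    obtain ⟨z, rfl⟩ := (hfg m).1 (Subtype.ext hgm)
    rw [show z = 0 from Subtype.ext ((hσ z).symm.trans hσm), map_zero]
  · rintro ⟨w, hw⟩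
    have hw₁ : C.d 0 w.1 + t.δ 0 w.2 = 0 := congrArg Prod.fst hw
    obtain ⟨m, hm⟩ := hg ⟨w.2, congrArg Prod.snd hw⟩
    have hσm := hσδ m
    rw [hm] at hσm
    have hz : C.d 0 (w.1 - σ m) = 0 := by
      rw [map_sub, eq_neg_of_add_eq_zero_left hw₁, eq_neg_of_add_eq_zero_left hσm, sub_self]
    refine ⟨m + f ⟨_, hz⟩, Subtype.ext (Prod.ext ?_ ?_)⟩
    · change σ (m + f ⟨_, hz⟩) = w.1
      rw [map_add, hσ, add_sub_cancel]
    · change ((g (m + f ⟨_, hz⟩) : ker (D.d 0)) : D.P 0) = w.2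
      rw [map_add, hfg.apply_apply_eq_zero, add_zero, hm]

/-- The invariant carried along the construction in both directions is that `δ n` maps cycles to
cycles. -/
theorem exists_δ_zero_eq (hCproj : C.IsProj) (hCfg : C.IsFG) (hCa : C.Acyclic)
    (hDproj : D.IsProj) (hDa : D.Acyclic) (hDd : D.DualAcyclic)
    (δ₀ : D.P 0 →ₗ[A] C.P (0 + 1)) (hδ₀ : ∀ y, D.d 0 y = 0 → C.d (0 + 1) (δ₀ y) = 0) :
    ∃ t : Twisting C D, t.δ 0 = δ₀ := by
  obtain ⟨δ, rfl, hδ⟩ := Int.exists_seq_of_extend_up_down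
    (X := fun n => D.P n →ₗ[A] C.P (n + 1))
    (fun n δ => ∀ y, D.d n y = 0 → C.d (n + 1) (δ y) = 0)
    (fun n δ δ' => ∀ y, C.d (n + 1) (δ y) + δ' (D.d n y) = 0) δ₀ hδ₀
    (fun n δ hδ => by
      have := hCproj (n + 1 + 1)
      have := hCfg (n + 1 + 1)
      obtain ⟨δ', hδ'⟩ := hDd.exists_comp_d_eq (-(C.d (n + 1) ∘ₗ δ))
        fun y hy => by simp [hδ y hy]
      have hδ'_apply : ∀ y, δ' (D.d n y) = -C.d (n + 1) (δ y) := LinearMap.congr_fun hδ'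
      refine ⟨δ', fun y hy => ?_, fun y => by rw [hδ'_apply, add_neg_cancel]⟩
      obtain ⟨x, rfl⟩ := (hDa n y).1 hy
      rw [hδ'_apply, map_neg, C.comp_eq_zero, neg_zero])
    (fun n δ' hδ' => by
      have := hDproj n
      obtain ⟨δ, hδ⟩ := hCa.exists_d_comp_eq (-(δ' ∘ₗ D.d n)) (by
        ext y
        simp [hδ' _ (D.comp_eq_zero n y)])
      have hδ_apply : ∀ y, C.d (n + 1) (δ y) = -δ' (D.d n y) := LinearMap.congr_fun hδ
      refine ⟨δ, fun y hy => ?_, fun y => by rw [hδ_apply, neg_add_cancel]⟩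
      rw [hδ_apply, hy, map_zero, neg_zero])
  exact ⟨⟨δ, hδ⟩, rfl⟩

end Twisting

theorem exists_horseshoe_degree_zero (hCproj : C.IsProj) (hCfg : C.IsFG) (hDproj : D.IsProj)
    (hDa : D.Acyclic) (hDd : D.DualAcyclic) {M : Type u} [AddCommGroup M] [Module A M]
    {f : ker (C.d 0) →ₗ[A] M} {g : M →ₗ[A] ker (D.d 0)} (hfg : Exact f g) (hf : Injective f)
    (hg : Surjective g) :
    ∃ (σ : M →ₗ[A] C.P 0) (δ₀ : D.P 0 →ₗ[A] C.P (0 + 1)),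
      (∀ z, σ (f z) = z) ∧ ∀ m, C.d 0 (σ m) + δ₀ (g m) = 0 := by
  have := hCproj 0
  have := hCfg 0
  have := hDproj (-1)
  have hp : Surjective (D.toCycles (-1)) := hDa.surjective_toCycles (-1)
  have hdp : Exact (D.d (-2)) (D.toCycles (-1)) := hDa.exact_toCycles (-2)
  obtain ⟨σ, hσ⟩ := hfg.exists_comp_eq_of_presentation hf hg hp hdp
    (fun β => hDd.exists_comp_d_eq β) (ker (C.d 0)).subtype
  have hσ_apply : ∀ z, σ (f z) = z := LinearMap.congr_fun hσ
  -- `-d ∘ σ` kills `N`, so it factors through `L = ker (D.d 0)` and then extends to `D.P 0`.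
  obtain ⟨e, he⟩ := LinearMap.exists_comp_eq_of_surjective hg (-(C.d 0 ∘ₗ σ)) fun m hm => by
    obtain ⟨z, rfl⟩ := (hfg m).1 hm
    simp [hσ_apply]
  have := hCproj (0 + 1)
  have := hCfg (0 + 1)
  obtain ⟨δ₀, hδ₀⟩ := hDd.exists_comp_d_eq (n := -1) (e ∘ₗ D.toCycles (-1)) fun x hx => by
    simp [show D.toCycles (-1) x = 0 from Subtype.ext hx]
  refine ⟨σ, δ₀, hσ_apply, fun m => ?_⟩
  obtain ⟨x, hx⟩ := hDa.surjective_toCycles (-1) (g m)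
  have hδ₀x : δ₀ (D.d (-1) x) = e (g m) := by rw [← hx]; exact LinearMap.congr_fun hδ₀ x
  rw [← hx, coe_toCycles, hδ₀x, ← LinearMap.comp_apply e g, he]
  simp

end ZComplex

theorem stmt_5 (N M L : Type u) [AddCommGroup N] [Module A N]
    [AddCommGroup M] [Module A M]
    [AddCommGroup L] [Module A L]
    (f : N →ₗ[A] M) (g : M →ₗ[A] L)
    (hf : Function.Injective f) (hg : Function.Surjective g) (hfg : Function.Exact f g)
    (hN : IsGProj A N) (hL : IsGProj A L) :
    IsGProj A M := by
  obtain ⟨C, hCproj, hCfg, hCa, hCd, ⟨φ⟩⟩ := hN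
  obtain ⟨D, hDproj, hDfg, hDa, hDd, ⟨ψ⟩⟩ := hL
  have hfg' : Exact (f ∘ₗ φ.toLinearMap) (ψ.symm.toLinearMap ∘ₗ g) :=
    LinearEquiv.precomp_exact_iff_exact.2 (LinearEquiv.postcomp_exact_iff_exact.2 hfg)
  have hg' : Surjective (ψ.symm.toLinearMap ∘ₗ g) := ψ.symm.surjective.comp hg
  obtain ⟨σ, δ₀, hσ, hσδ₀⟩ :=
    ZComplex.exists_horseshoe_degree_zero hCproj hCfg hDproj hDa hDd hfg' (hf.comp φ.injective) hg'
  have hδ₀ : ∀ y, D.d 0 y = 0 → C.d (0 + 1) (δ₀ y) = 0 := fun y hy => by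
    obtain ⟨m, hm⟩ := hg' ⟨y, hy⟩
    rw [show y = _ from congrArg Subtype.val hm.symm, eq_neg_of_add_eq_zero_right (hσδ₀ m), map_neg,
      C.comp_eq_zero, neg_zero]
  obtain ⟨t, rfl⟩ := ZComplex.Twisting.exists_δ_zero_eq hCproj hCfg hCa hDproj hDa hDd δ₀ hδ₀
  exact ⟨t.total, t.total_isProj hCproj hDproj, t.total_isFG hCfg hDfg, t.total_acyclic hCa hDa,
    t.total_dualAcyclic hCd hDd, t.nonempty_ker_total_d_zero_equiv hg' hfg' σ hσ hσδ₀⟩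
end

section
/- Let A be an artin algebra and 0 → N → M → L → 0 a short exact sequence of finitely generated A-modules with M and L Gorenstein-projective. Then N is Gorenstein-projective. -/
universe u

open Function LinearMap

variable (A : Type u) [Ring A]

/-!
Lift `g` to a chain map `ψ : C → D` between complete resolutions of `M` and `L`. The
desuspended mapping cone `G` of `ψ`, with `G^n = C^n × D^(n-1)`, is again a totally acyclic
complex of finitely generated projectives, and its `0`-cocycles are the pullback of
`g : M → L` along `d : D^(-1) → L`: an extension of the projective module `D^(-1)` by `N`, which
therefore splits as `N ⊕ D^(-1)`. A projective summand `P` of the `0`-cocycles can be removed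
from a totally acyclic complex by adding `P` to its terms in degrees `1` and `-2` and twisting the
differentials around degree `0`.
-/

lemma LinearMap.map_prod_mk_eq_add {R X Y T : Type*} [Semiring R] [AddCommMonoid X]
    [AddCommMonoid Y] [AddCommMonoid T] [Module R X] [Module R Y] [Module R T]
    (f : X × Y →ₗ[R] T) (x : X) (y : Y) : f (x, y) = f (x, 0) + f (0, y) := by
  rw [← map_add, Prod.mk_add_mk, add_zero, zero_add]

variable {A} in
lemma IsGProj.of_linearEquiv {X Y : Type u} [AddCommGroup X] [Module A X] [AddCommGroup Y]
    [Module A Y] (h : IsGProj A X) (e : X ≃ₗ[A] Y) : IsGProj A Y :=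
  let ⟨C, hP, hF, hAc, hDu, ⟨e'⟩⟩ := h
  ⟨C, hP, hF, hAc, hDu, ⟨e'.trans e⟩⟩

namespace ZComplex

variable {A}

lemma comp_d_comp_d (C : ZComplex A) {n : ℤ} {T : Type u} [AddCommGroup T] [Module A T]
    (g : C.P (n + 1 + 1) →ₗ[A] T) : (g ∘ₗ C.d (n + 1)) ∘ₗ C.d n = 0 :=
  LinearMap.ext fun x => by simp [C.comp_eq_zero]

lemma exact_d_of_exists (C : ZComplex A) (n : ℤ)
    (h : ∀ y, C.d (n + 1) y = 0 → ∃ x, C.d n x = y) : Function.Exact (C.d n) (C.d (n + 1)) :=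
  fun y => ⟨h y, by rintro ⟨x, rfl⟩; exact C.comp_eq_zero n x⟩

lemma exact_dual_of_exists (C : ZComplex A) (n : ℤ)
    (h : ∀ f : C.P (n + 1) →ₗ[A] A, f ∘ₗ C.d n = 0 → ∃ g, g ∘ₗ C.d (n + 1) = f) :
    Function.Exact (fun g : C.P (n + 1 + 1) →ₗ[A] A => g ∘ₗ C.d (n + 1))
      (fun f : C.P (n + 1) →ₗ[A] A => f ∘ₗ C.d n) :=
  fun f => ⟨h f, by rintro ⟨g, rfl⟩; exact C.comp_d_comp_d g⟩

section Shift

def castHom (C : ZComplex A) {m n : ℤ} (h : m = n) : C.P m →ₗ[A] C.P n := h ▸ LinearMap.id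

variable (C : ZComplex A)

lemma d_castHom {m n : ℤ} (h : m = n) (x : C.P m) :
    C.d n (C.castHom h x) = C.castHom (by rw [h]) (C.d m x) := by
  subst h; rfl

lemma castHom_eq_zero_iff {m n : ℤ} (h : m = n) (x : C.P m) : C.castHom h x = 0 ↔ x = 0 := by
  subst h; rfl

def shift : ZComplex A where
  P n := C.P (n - 1)
  d n := C.castHom (by ring) ∘ₗ C.d (n - 1)
  comp_eq_zero n x := by
    simp only [LinearMap.comp_apply, d_castHom, C.comp_eq_zero, map_zero]

lemma shift_d_eq_zero_iff {n : ℤ} (x : C.shift.P n) : C.shift.d n x = 0 ↔ C.d (n - 1) x = 0 :=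
  castHom_eq_zero_iff C _ _

variable {C}

lemma IsProj.shift (h : C.IsProj) : C.shift.IsProj := fun n => h (n - 1)

lemma IsFG.shift (h : C.IsFG) : C.shift.IsFG := fun n => h (n - 1)

lemma Acyclic.exact_castHom (h : C.Acyclic) {a b c : ℤ} (h₁ : a + 1 = b) (h₂ : b + 1 = c) :
    Function.Exact (C.castHom h₁ ∘ₗ C.d a) (C.castHom h₂ ∘ₗ C.d b) := by
  subst h₁ h₂; exact h a

lemma DualAcyclic.exact_castHom (h : C.DualAcyclic) {a b c : ℤ} (h₁ : a + 1 = b)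
    (h₂ : b + 1 = c) :
    Function.Exact (fun g : C.P c →ₗ[A] A => g ∘ₗ C.castHom h₂ ∘ₗ C.d b)
      (fun f : C.P b →ₗ[A] A => f ∘ₗ C.castHom h₁ ∘ₗ C.d a) := by
  subst h₁ h₂; exact h a

lemma Acyclic.shift (h : C.Acyclic) : C.shift.Acyclic :=
  fun _ => h.exact_castHom (by ring) (by ring)

lemma DualAcyclic.shift (h : C.DualAcyclic) : C.shift.DualAcyclic :=
  fun _ => h.exact_castHom (by ring) (by ring)

end Shift

section Extension

variable {C : ZComplex A} {T : Type u} [AddCommGroup T] [Module A T]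
  [Module.Projective A T] [Module.Finite A T]

/-- Exactness of `Hom_A(C, A)` passes to `Hom_A(C, T)`, `T` being a retract of some `Aᵏ`. -/
lemma DualAcyclic.exists_comp_eq (hC : C.DualAcyclic) {n : ℤ} (w : C.P (n + 1) →ₗ[A] T)
    (hw : w ∘ₗ C.d n = 0) : ∃ h : C.P (n + 1 + 1) →ₗ[A] T, h ∘ₗ C.d (n + 1) = w := by
  obtain ⟨k, π, hπ⟩ := Module.Finite.exists_fin' A T
  obtain ⟨ι, hι⟩ := π.exists_rightInverse_of_surjective (LinearMap.range_eq_top.mpr hπ)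
  have hcoord (i : Fin k) : (LinearMap.proj i ∘ₗ ι ∘ₗ w) ∘ₗ C.d n = 0 := by
    rw [LinearMap.comp_assoc, LinearMap.comp_assoc, hw, LinearMap.comp_zero, LinearMap.comp_zero]
  choose h hh using fun i => (hC n _).mp (hcoord i)
  refine ⟨π ∘ₗ LinearMap.pi h, LinearMap.ext fun x => ?_⟩
  have hx : LinearMap.pi h (C.d (n + 1) x) = ι (w x) := funext fun i => LinearMap.congr_fun (hh i) x
  simpa [hx] using LinearMap.congr_fun hι (w x)

lemma DualAcyclic.exists_comp_d_eq_s7 (hDu : C.DualAcyclic) {n : ℤ} (w : C.P n →ₗ[A] T)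
    (hw : ∀ x, C.d n x = 0 → w x = 0) : ∃ h : C.P (n + 1) →ₗ[A] T, h ∘ₗ C.d n = w := by
  obtain ⟨m, rfl⟩ : ∃ m, m + 1 = n := ⟨n - 1, by ring⟩
  refine hDu.exists_comp_eq w (LinearMap.ext fun x => hw _ ?_)
  exact C.comp_eq_zero m x

lemma exists_extend_cocycles (hAc : C.Acyclic) (hDu : C.DualAcyclic) {n : ℤ}
    (v : LinearMap.ker (C.d (n + 1)) →ₗ[A] T) :
    ∃ h : C.P (n + 1) →ₗ[A] T, ∀ z (hz : C.d (n + 1) z = 0), h z = v ⟨z, hz⟩ := by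
  let w := v ∘ₗ (C.d n).codRestrict _ fun x => C.comp_eq_zero n x
  obtain ⟨h, hh⟩ := hDu.exists_comp_d_eq_s7 w fun x hx => by
    simpa [w] using congrArg v (Subtype.ext hx : (C.d n).codRestrict _ _ x = 0)
  refine ⟨h, fun z hz => ?_⟩
  obtain ⟨y, rfl⟩ := (hAc n z).mp hz
  exact LinearMap.congr_fun hh y

end Extension

section ChainMap

variable {C B : ZComplex A}

lemma exists_succ_lift (hAcC : C.Acyclic) (hDuC : C.DualAcyclic) (hPB : B.IsProj)
    (hFB : B.IsFG) {n : ℤ} (f : C.P n →ₗ[A] B.P (n + 1))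
    (hf : ∀ x, C.d n x = 0 → B.d (n + 1) (f x) = 0) :
    ∃ f' : C.P (n + 1) →ₗ[A] B.P (n + 1 + 1), f' ∘ₗ C.d n = B.d (n + 1) ∘ₗ f ∧
      ∀ x, C.d (n + 1) x = 0 → B.d (n + 1 + 1) (f' x) = 0 := by
  have := hPB (n + 1 + 1)
  have := hFB (n + 1 + 1)
  obtain ⟨f', hf'⟩ := hDuC.exists_comp_d_eq_s7 (B.d (n + 1) ∘ₗ f) hf
  refine ⟨f', hf', fun x hx => ?_⟩
  obtain ⟨y, rfl⟩ := (hAcC n x).mp hx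
  rw [← LinearMap.comp_apply f', hf', LinearMap.comp_apply, B.comp_eq_zero]

lemma exists_pred_lift (hPC : C.IsProj) (hAcB : B.Acyclic) {n : ℤ}
    (f : C.P (n + 1) →ₗ[A] B.P (n + 1 + 1)) (hf : ∀ x, B.d (n + 1 + 1) (f (C.d n x)) = 0) :
    ∃ f' : C.P n →ₗ[A] B.P (n + 1), B.d (n + 1) ∘ₗ f' = f ∘ₗ C.d n := by
  have := hPC n
  have hrange (x : C.P n) : f (C.d n x) ∈ LinearMap.range (B.d (n + 1)) :=
    (hAcB (n + 1) _).mp (hf x)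
  obtain ⟨f', hf'⟩ := Module.projective_lifting_property (B.d (n + 1)).rangeRestrict
    ((f ∘ₗ C.d n).codRestrict _ hrange) (LinearMap.surjective_rangeRestrict _)
  exact ⟨f', LinearMap.ext fun x => congrArg Subtype.val (LinearMap.congr_fun hf' x)⟩

lemma exists_chainMap_extending (hAcC : C.Acyclic) (hDuC : C.DualAcyclic) (hPC : C.IsProj)
    (hAcB : B.Acyclic) (hPB : B.IsProj) (hFB : B.IsFG)
    (γ : LinearMap.ker (C.d 0) →ₗ[A] B.P 1) (hγ : ∀ z, B.d 1 (γ z) = 0) :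
    ∃ ψ : ∀ n : ℤ, C.P n →ₗ[A] B.P (n + 1),
      (∀ n x, B.d (n + 1) (ψ n x) = ψ (n + 1) (C.d n x)) ∧
      ∀ z (hz : C.d 0 z = 0), ψ 0 z = γ ⟨z, hz⟩ := by
  have := hPB 1
  have := hFB 1
  obtain ⟨ψ₀, hψ₀⟩ := exists_extend_cocycles hAcC hDuC (n := -1) γ
  choose up hup_link hup using fun (n : ℤ) (f : C.P n →ₗ[A] B.P (n + 1)) hf =>
    exists_succ_lift hAcC hDuC hPB hFB f hf
  choose down hdown using fun (n : ℤ) (f : C.P (n + 1) →ₗ[A] B.P (n + 1 + 1))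
    (_ : ∀ x, B.d (n + 1 + 1) (f (C.d n x)) = 0) => exists_pred_lift hPC hAcB f ‹_›
  let ups (k : ℕ) : {f : C.P k →ₗ[A] B.P (k + 1) //
      ∀ x, C.d k x = 0 → B.d (k + 1) (f x) = 0} :=
    Nat.rec ⟨ψ₀, fun x hx => by rw [hψ₀ x hx]; exact hγ _⟩
      (fun k f => ⟨up k f.1 f.2, hup k f.1 f.2⟩) k
  let downs (k : ℕ) : {f : C.P (Int.negSucc k + 1) →ₗ[A] B.P (Int.negSucc k + 1 + 1) //
      ∀ x, B.d (Int.negSucc k + 1 + 1) (f (C.d (Int.negSucc k) x)) = 0} :=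
    Nat.rec ⟨ψ₀, fun x => by
        rw [hψ₀ _ (C.comp_eq_zero (Int.negSucc 0) x)]; exact hγ _⟩
      (fun k f => ⟨down (Int.negSucc k) f.1 f.2, fun x =>
        (LinearMap.congr_fun (hdown _ f.1 f.2) (C.d (Int.negSucc (k + 1)) x)).trans <| by
          rw [LinearMap.comp_apply, show C.d (Int.negSucc k) (C.d (Int.negSucc (k + 1)) x) = 0
            from C.comp_eq_zero _ x, map_zero]⟩) k
  refine ⟨fun n => match n with
    | Int.ofNat k => (ups k).1
    | Int.negSucc k => (downs (k + 1)).1, ?_, fun z hz => hψ₀ z hz⟩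
  rintro (k | _ | k) x
  · exact (LinearMap.congr_fun (hup_link k _ (ups k).2) x).symm
  · exact LinearMap.congr_fun (hdown _ ψ₀ (downs 0).2) x
  · exact LinearMap.congr_fun (hdown _ _ (downs (k + 1)).2) x

end ChainMap

section Cone

variable {C B : ZComplex A} (ψ : ∀ n : ℤ, C.P n →ₗ[A] B.P (n + 1))
  (hψ : ∀ n x, B.d (n + 1) (ψ n x) = ψ (n + 1) (C.d n x))

/-- The mapping cone of the chain map `ψ : C → B[1]`, desuspended so that its term in degree `n`
is `C^n × B^n`; its `0`-cocycles are the pullback of `ψ` along `d : B^0 → B^1`. -/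
def cone : ZComplex A where
  P n := ModuleCat.of A (C.P n × B.P n)
  d n := (C.d n ∘ₗ LinearMap.fst A _ _).prod
    (ψ n ∘ₗ LinearMap.fst A _ _ - B.d n ∘ₗ LinearMap.snd A _ _)
  comp_eq_zero n x := by
    ext
    · exact C.comp_eq_zero n x.1
    · simp [← hψ, B.comp_eq_zero]

lemma IsProj.cone (hC : C.IsProj) (hB : B.IsProj) : (cone ψ hψ).IsProj := fun n =>
  have := hC n
  have := hB n
  inferInstanceAs (Module.Projective A (C.P n × B.P n))

lemma IsFG.cone (hC : C.IsFG) (hB : B.IsFG) : (cone ψ hψ).IsFG := fun n =>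
  have := hC n
  have := hB n
  inferInstanceAs (Module.Finite A (C.P n × B.P n))

lemma Acyclic.cone (hC : C.Acyclic) (hB : B.Acyclic) : (cone ψ hψ).Acyclic := fun n =>
  exact_d_of_exists _ n fun y hy => by
    obtain ⟨c, hc⟩ := (hC n y.1).mp (congrArg Prod.fst hy)
    obtain ⟨b, hb⟩ := (hB n (ψ n c - y.2)).mp <| by
      rw [map_sub, hψ, hc]; exact congrArg Prod.snd hy
    exact ⟨(c, b), Prod.ext hc (show ψ n c - B.d n b = y.2 by rw [hb, sub_sub_cancel])⟩

lemma DualAcyclic.cone (hC : C.DualAcyclic) (hB : B.DualAcyclic) :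
    (cone ψ hψ).DualAcyclic := fun n =>
  exact_dual_of_exists _ n fun (f : C.P (n + 1) × B.P (n + 1) →ₗ[A] A) hf => by
    set f₁ := f ∘ₗ LinearMap.inl A (C.P (n + 1)) (B.P (n + 1))
    set f₂ := f ∘ₗ LinearMap.inr A (C.P (n + 1)) (B.P (n + 1))
    have hsplit (z : C.P (n + 1) × B.P (n + 1)) : f z = f₁ z.1 + f₂ z.2 := by
      rw [← LinearMap.coprod_apply, LinearMap.coprod_comp_inl_inr]
    have hcond (c : C.P n) (b : B.P n) : f₁ (C.d n c) + f₂ (ψ n c - B.d n b) = 0 :=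
      (hsplit _).symm.trans (LinearMap.congr_fun hf (c, b))
    obtain ⟨g₂, hg₂⟩ := (hB n f₂).mp (LinearMap.ext fun b => by simpa using hcond 0 b)
    have hg₂' (b : B.P (n + 1)) : g₂ (B.d (n + 1) b) = f₂ b := LinearMap.congr_fun hg₂ b
    obtain ⟨h₁, hh₁⟩ := (hC n (f₁ + g₂ ∘ₗ ψ (n + 1))).mp (LinearMap.ext fun c => by
      simpa [← hψ, hg₂'] using hcond c 0)
    have hh₁' (c : C.P (n + 1)) : h₁ (C.d (n + 1) c) = f₁ c + g₂ (ψ (n + 1) c) :=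
      LinearMap.congr_fun hh₁ c
    refine ⟨h₁ ∘ₗ LinearMap.fst A _ _ - g₂ ∘ₗ LinearMap.snd A _ _,
      LinearMap.ext fun (z : C.P (n + 1) × B.P (n + 1)) => ?_⟩
    change h₁ (C.d (n + 1) z.1) - g₂ (ψ (n + 1) z.1 - B.d (n + 1) z.2) = f z
    rw [hsplit, hh₁', map_sub, hg₂']
    abel

lemma exists_cone_cocycle_snd_eq
    (hψ₀ : ∀ w, B.d 1 w = 0 → ∃ c, C.d 0 c = 0 ∧ ψ 0 c = w) (p : B.P 0) :
    ∃ x : (cone ψ hψ).P 0, (cone ψ hψ).d 0 x = 0 ∧ x.2 = p := by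
  obtain ⟨c, hc, hψc⟩ := hψ₀ (B.d 0 p) (B.comp_eq_zero 0 p)
  exact ⟨(c, p), Prod.ext hc (show ψ 0 c - B.d 0 p = 0 by rw [hψc, sub_self]), rfl⟩

lemma nonempty_linearEquiv_ker_cone {N M L : Type u} [AddCommGroup N] [Module A N]
    [AddCommGroup M] [Module A M] [AddCommGroup L] [Module A L] {f : N →ₗ[A] M}
    {g : M →ₗ[A] L} (hf : Function.Injective f) (hfg : Function.Exact f g)
    (e : LinearMap.ker (C.d 0) ≃ₗ[A] M) {j : L →ₗ[A] B.P 1} (hj : Function.Injective j)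
    (hψ₀ : ∀ z (hz : C.d 0 z = 0), ψ 0 z = j (g (e ⟨z, hz⟩))) :
    Nonempty (N ≃ₗ[A]
      LinearMap.ker (((cone ψ hψ).d 0).prod (LinearMap.snd A (C.P 0) (B.P 0)))) := by
  let θ₀ : N →ₗ[A] (cone ψ hψ).P 0 :=
    LinearMap.inl A _ _ ∘ₗ (LinearMap.ker (C.d 0)).subtype ∘ₗ e.symm.toLinearMap ∘ₗ f
  have hθ₀ (n : N) : θ₀ n ∈ LinearMap.ker (((cone ψ hψ).d 0).prod (LinearMap.snd A _ _)) := by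
    have hc := (e.symm (f n)).2
    refine Prod.ext (Prod.ext hc ?_) rfl
    change ψ 0 (e.symm (f n)).1 - B.d 0 0 = 0
    rw [hψ₀ _ hc, Subtype.coe_eta, e.apply_symm_apply, hfg.apply_apply_eq_zero, map_zero,
      map_zero, sub_zero]
  refine ⟨LinearEquiv.ofBijective (θ₀.codRestrict _ hθ₀) ⟨fun n n' h => ?_, ?_⟩⟩
  · exact hf (e.symm.injective (Subtype.ext (congrArg (fun x => x.1.1) h)))
  · rintro ⟨⟨c, b⟩, hx⟩
    have hb : b = 0 := congrArg Prod.snd hx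
    have hc : C.d 0 c = 0 := congrArg (fun x => x.1.1) hx
    have hψc : ψ 0 c - B.d 0 b = 0 := congrArg (fun x => x.1.2) hx
    rw [hb, map_zero, sub_zero] at hψc
    obtain ⟨n, hn⟩ := (hfg (e ⟨c, hc⟩)).mp (hj (by rw [← hψ₀ c hc, hψc, map_zero]))
    refine ⟨n, Subtype.ext (Prod.ext ?_ hb.symm)⟩
    change (e.symm (f n)).1 = c
    rw [hn, e.symm_apply_apply]

end Cone

section SplitOff

variable (G : ZComplex A) {P : Type u} [AddCommGroup P] [Module A P]
  (ρ : G.P 0 →ₗ[A] P) (s : P →ₗ[A] G.P (-1))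

/-- `G.d (-2)` with codomain `G.P (-1)` rather than `G.P (-2 + 1)`, so that it can be added to
maps into `G.P (-1)`. -/
abbrev dNegTwo : G.P (-2) →ₗ[A] G.P (-1) := G.d (-2)

def splitOffP : ℤ → ModuleCat.{u} A
  | .ofNat 0 => G.P 0
  | .ofNat 1 => ModuleCat.of A (G.P 1 × P)
  | .ofNat (k + 2) => G.P (.ofNat (k + 2))
  | .negSucc 0 => G.P (-1)
  | .negSucc 1 => ModuleCat.of A (G.P (-2) × P)
  | .negSucc (k + 2) => G.P (.negSucc (k + 2))

def splitOffD : ∀ n : ℤ, splitOffP G (P := P) n →ₗ[A] splitOffP G (P := P) (n + 1)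
  | .ofNat 0 => (G.d 0).prod ρ
  | .ofNat 1 => G.d 1 ∘ₗ LinearMap.fst A _ _
  | .ofNat (k + 2) => G.d (.ofNat (k + 2))
  | .negSucc 0 => G.d (-1) ∘ₗ (LinearMap.id - s ∘ₗ ρ ∘ₗ G.d (-1))
  | .negSucc 1 => G.dNegTwo ∘ₗ LinearMap.fst A _ _ + s ∘ₗ LinearMap.snd A _ _
  | .negSucc 2 => (G.d (.negSucc 2)).prod 0
  | .negSucc (k + 3) => G.d (.negSucc (k + 3))

variable {G} in
lemma d_dNegTwo (u : G.P (-2)) : G.d (-1) (G.dNegTwo u) = 0 := G.comp_eq_zero (-2) u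

variable (hs : ∀ p, ρ (G.d (-1) (s p)) = p)

/-- Given a section `s` of `ρ ∘ d : G^(-1) → P`, the complex
`⋯ → G^(-3) → G^(-2) × P → G^(-1) → G^0 → G^1 × P → G^2 → ⋯`, whose differentials out of
`G^(-1)` and `G^0` are `d ∘ (1 - s ρ d)` and `(d, ρ)`. -/
def splitOff : ZComplex A where
  P := splitOffP G (P := P)
  d := splitOffD G ρ s
  comp_eq_zero n := match n with
    | .ofNat 0 => fun x => G.comp_eq_zero 0 x
    | .ofNat 1 => fun x => G.comp_eq_zero 1 x.1
    | .ofNat (k + 2) => fun x => G.comp_eq_zero _ x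
    | .negSucc 0 => fun (x : G.P (-1)) => by
      refine Prod.ext (by exact G.comp_eq_zero (-1) _) ?_
      change ρ (G.d (-1) (x - s (ρ (G.d (-1) x)))) = 0
      rw [map_sub, map_sub, hs, sub_self]
    | .negSucc 1 => fun (x : G.P (-2) × P) => by
      change G.d (-1) (G.dNegTwo x.1 + s x.2 - s (ρ (G.d (-1) (G.dNegTwo x.1 + s x.2)))) = 0
      rw [map_add, map_add, hs, d_dNegTwo, map_zero, zero_add, add_sub_cancel_right, d_dNegTwo]
    | .negSucc 2 => fun (x : G.P (.negSucc 2)) => by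
      change G.dNegTwo (G.d (.negSucc 2) x) + s 0 = 0
      rw [map_zero, add_zero]
      exact G.comp_eq_zero _ x
    | .negSucc 3 => fun x => Prod.ext (by exact G.comp_eq_zero (.negSucc 3) x) rfl
    | .negSucc (k + 4) => fun x => G.comp_eq_zero _ x

variable {G ρ s}

lemma IsProj.splitOff (hG : G.IsProj) [Module.Projective A P] : (G.splitOff ρ s hs).IsProj
  | .ofNat 0 => hG 0
  | .ofNat 1 => have := hG 1; inferInstanceAs (Module.Projective A (G.P 1 × P))
  | .ofNat (_ + 2) => hG _
  | .negSucc 0 => hG _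
  | .negSucc 1 => have := hG (-2); inferInstanceAs (Module.Projective A (G.P (-2) × P))
  | .negSucc (_ + 2) => hG _

lemma IsFG.splitOff (hG : G.IsFG) [Module.Finite A P] : (G.splitOff ρ s hs).IsFG
  | .ofNat 0 => hG 0
  | .ofNat 1 => have := hG 1; inferInstanceAs (Module.Finite A (G.P 1 × P))
  | .ofNat (_ + 2) => hG _
  | .negSucc 0 => hG _
  | .negSucc 1 => have := hG (-2); inferInstanceAs (Module.Finite A (G.P (-2) × P))
  | .negSucc (_ + 2) => hG _

lemma Acyclic.splitOff (hG : G.Acyclic) (hρ : ∀ p, ∃ x, G.d 0 x = 0 ∧ ρ x = p) :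
    (G.splitOff ρ s hs).Acyclic
  | .ofNat 0 => exact_d_of_exists _ _ fun (y : G.P 1 × P) hy => by
      obtain ⟨x, hx⟩ := (hG 0 y.1).mp hy
      obtain ⟨z, hz, hρz⟩ := hρ (y.2 - ρ x)
      refine ⟨x + z, Prod.ext ?_ ?_⟩
      · change G.d 0 (x + z) = y.1
        rw [map_add, hx, hz, add_zero]
      · change ρ (x + z) = y.2
        rw [map_add, hρz, add_sub_cancel]
  | .ofNat 1 => exact_d_of_exists _ _ fun (y : G.P 2) hy => by
      obtain ⟨x, hx⟩ := (hG 1 y).mp hy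
      exact ⟨(x, 0), hx⟩
  | .ofNat (_ + 2) => hG _
  | .negSucc 0 => exact_d_of_exists _ _ fun (y : G.P 0) hy => by
      obtain ⟨x, hx⟩ := (hG (-1) _).mp (by exact congrArg Prod.fst hy)
      refine ⟨x, ?_⟩
      change G.d (-1) (x - s (ρ (G.d (-1) x))) = y
      rw [hx, show ρ y = 0 from congrArg Prod.snd hy, map_zero, sub_zero, hx]
  | .negSucc 1 => exact_d_of_exists _ _ fun (y : G.P (-1)) hy => by
      change G.d (-1) (y - s (ρ (G.d (-1) y))) = 0 at hy
      obtain ⟨u, hu⟩ := (hG (-2) _).mp hy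
      refine ⟨(u, ρ (G.d (-1) y)), ?_⟩
      change G.dNegTwo u + s (ρ (G.d (-1) y)) = y
      rw [show G.dNegTwo u = _ from hu, sub_add_cancel]
  | .negSucc 2 => exact_d_of_exists _ _ fun (y : G.P (-2) × P) hy => by
      change G.dNegTwo y.1 + s y.2 = 0 at hy
      have hy₂ : y.2 = 0 := by
        have := congrArg (fun y => ρ (G.d (-1) y)) hy
        rwa [map_add, map_add, d_dNegTwo, hs, map_zero, zero_add, map_zero, map_zero] at this
      rw [hy₂, map_zero, add_zero] at hy
      obtain ⟨u, hu⟩ := (hG (.negSucc 2) y.1).mp hy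
      exact ⟨u, Prod.ext hu hy₂.symm⟩
  | .negSucc 3 => exact_d_of_exists _ _ fun (y : G.P (.negSucc 2)) hy =>
      (hG (.negSucc 3) y).mp (congrArg Prod.fst hy)
  | .negSucc (_ + 4) => hG _

lemma DualAcyclic.splitOff (hG : G.DualAcyclic) (hρ : ∀ p, ∃ x, G.d 0 x = 0 ∧ ρ x = p) :
    (G.splitOff ρ s hs).DualAcyclic
  | .ofNat 0 => exact_dual_of_exists _ _ fun (f : G.P 1 × P →ₗ[A] A) hf => by
      have hf' (x : G.P 0) : f (G.d 0 x, ρ x) = 0 := LinearMap.congr_fun hf x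
      have hf₂ (p : P) : f (0, p) = 0 := by
        obtain ⟨z, hz, rfl⟩ := hρ p
        rw [← hz, hf']
      obtain ⟨g, hg⟩ := (hG 0 (f ∘ₗ LinearMap.inl A _ _)).mp <| LinearMap.ext fun x => by
        have := hf' x
        rwa [LinearMap.map_prod_mk_eq_add f, hf₂, add_zero] at this
      have hg' (x : G.P 1) : g (G.d 1 x) = f (x, 0) := LinearMap.congr_fun hg x
      refine ⟨g, LinearMap.ext fun (y : G.P 1 × P) => ?_⟩
      change g (G.d 1 y.1) = f (y.1, y.2)
      rw [hg', LinearMap.map_prod_mk_eq_add f y.1 y.2, hf₂, add_zero]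
  | .ofNat 1 => exact_dual_of_exists _ _ fun (f : G.P 2 →ₗ[A] A) hf =>
      (hG 1 f).mp (LinearMap.ext fun x => LinearMap.congr_fun hf (x, (0 : P)))
  | .ofNat (k + 2) => hG (.ofNat (k + 2))
  | .negSucc 0 => exact_dual_of_exists _ _ fun (f : G.P 0 →ₗ[A] A) hf => by
      have hf' (y : G.P (-1)) : f (G.d (-1) y) = f (G.d (-1) (s (ρ (G.d (-1) y)))) := by
        have := LinearMap.congr_fun hf y
        change f (G.d (-1) (y - s (ρ (G.d (-1) y)))) = 0 at this
        rwa [map_sub, map_sub, sub_eq_zero] at this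
      let v := f ∘ₗ G.d (-1) ∘ₗ s
      obtain ⟨g, hg⟩ := (hG (-1) _).mp
        (show (f - v ∘ₗ ρ) ∘ₗ G.d (-1) = 0 from LinearMap.ext fun y => by
          rw [LinearMap.comp_apply, LinearMap.sub_apply, hf' y]
          exact sub_self _)
      have hg' (x : G.P 0) : g (G.d 0 x) = f x - v (ρ x) := LinearMap.congr_fun hg x
      refine ⟨g ∘ₗ LinearMap.fst A _ _ + v ∘ₗ LinearMap.snd A _ _,
        LinearMap.ext fun (x : G.P 0) => ?_⟩
      change g (G.d 0 x) + v (ρ x) = f x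
      rw [hg', sub_add_cancel]
  | .negSucc 1 => exact_dual_of_exists _ _ fun (f : G.P (-1) →ₗ[A] A) hf => by
      have hf' (u : G.P (-2)) (p : P) : f (G.dNegTwo u + s p) = 0 := LinearMap.congr_fun hf (u, p)
      obtain ⟨g, hg⟩ := (hG (-2) _).mp
        (show f ∘ₗ G.dNegTwo = 0 from LinearMap.ext fun u => by simpa using hf' u 0)
      have hg' (y : G.P (-1)) : g (G.d (-1) y) = f y := LinearMap.congr_fun hg y
      refine ⟨g, LinearMap.ext fun (y : G.P (-1)) => ?_⟩
      change g (G.d (-1) (y - s (ρ (G.d (-1) y)))) = f y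
      rw [hg', map_sub, sub_eq_self]
      simpa using hf' 0 (ρ (G.d (-1) y))
  | .negSucc 2 => exact_dual_of_exists _ _ fun (f : G.P (-2) × P →ₗ[A] A) hf => by
      have hf' (u : G.P (.negSucc 2)) : f (G.d (.negSucc 2) u, 0) = 0 := LinearMap.congr_fun hf u
      obtain ⟨g, hg⟩ : ∃ g : G.P (-1) →ₗ[A] A, g ∘ₗ G.dNegTwo = f ∘ₗ LinearMap.inl A _ _ :=
        (hG (.negSucc 2) (f ∘ₗ LinearMap.inl A _ _)).mp (LinearMap.ext hf')
      have hg' (u : G.P (-2)) : g (G.dNegTwo u) = f (u, 0) := LinearMap.congr_fun hg u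
      refine ⟨g + (f ∘ₗ LinearMap.inr A _ _ - g ∘ₗ s) ∘ₗ ρ ∘ₗ G.d (-1),
        LinearMap.ext fun (y : G.P (-2) × P) => ?_⟩
      change g (G.dNegTwo y.1 + s y.2) + (f (0, ρ (G.d (-1) (G.dNegTwo y.1 + s y.2)))
        - g (s (ρ (G.d (-1) (G.dNegTwo y.1 + s y.2))))) = f (y.1, y.2)
      have hτ : ρ (G.d (-1) (G.dNegTwo y.1 + s y.2)) = y.2 := by
        rw [map_add, map_add, d_dNegTwo, map_zero, zero_add, hs]
      rw [hτ, map_add, hg', LinearMap.map_prod_mk_eq_add f y.1 y.2]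
      abel
  | .negSucc 3 => exact_dual_of_exists _ _ fun (f : G.P (.negSucc 2) →ₗ[A] A) hf => by
      obtain ⟨g, hg⟩ := (hG (.negSucc 3) f).mp hf
      exact ⟨g ∘ₗ LinearMap.fst A _ _, LinearMap.ext fun u => LinearMap.congr_fun hg u⟩
  | .negSucc (k + 4) => hG (.negSucc (k + 4))

end SplitOff

/-- The `0`-cocycles of `G` split as `(ker ρ) ⊕ P`, and `splitOff` removes the summand `P`. -/
theorem isGProj_ker_prod {G : ZComplex A} (hPG : G.IsProj) (hFG : G.IsFG) (hAc : G.Acyclic)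
    (hDu : G.DualAcyclic) {P : Type u} [AddCommGroup P] [Module A P] [Module.Projective A P]
    [Module.Finite A P] (ρ : G.P 0 →ₗ[A] P) (hρ : ∀ p, ∃ x, G.d 0 x = 0 ∧ ρ x = p) :
    IsGProj A (LinearMap.ker ((G.d 0).prod ρ)) := by
  have hτ : Function.Surjective (ρ ∘ₗ G.d (-1)) := fun p => by
    obtain ⟨x, hx, rfl⟩ := hρ p
    obtain ⟨y, rfl⟩ := (hAc (-1) _).mp (by exact hx)
    exact ⟨y, rfl⟩
  obtain ⟨s, hs⟩ := (ρ ∘ₗ G.d (-1)).exists_rightInverse_of_surjective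
    (LinearMap.range_eq_top.mpr hτ)
  have hs' := LinearMap.congr_fun hs
  exact ⟨G.splitOff ρ s hs', hPG.splitOff hs', hFG.splitOff hs', hAc.splitOff hs' hρ,
    hDu.splitOff hs' hρ, ⟨LinearEquiv.refl A _⟩⟩

end ZComplex

theorem stmt_7 (N M L : Type u) [AddCommGroup N] [Module A N]
    [AddCommGroup M] [Module A M]
    [AddCommGroup L] [Module A L]
    (f : N →ₗ[A] M) (g : M →ₗ[A] L)
    (hf : Function.Injective f) (hg : Function.Surjective g) (hfg : Function.Exact f g)
    (hM : IsGProj A M) (hL : IsGProj A L) :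
    IsGProj A N := by
  obtain ⟨C, hPC, hFC, hAcC, hDuC, ⟨eM⟩⟩ := hM
  obtain ⟨D, hPD, hFD, hAcD, hDuD, ⟨eL⟩⟩ := hL
  let j : L →ₗ[A] D.shift.P 1 := (LinearMap.ker (D.d 0)).subtype ∘ₗ eL.symm.toLinearMap
  have hj_d (l : L) : D.shift.d 1 (j l) = 0 := (D.shift_d_eq_zero_iff _).mpr (eL.symm l).2
  have hj_surj (w : D.shift.P 1) (hw : D.shift.d 1 w = 0) : ∃ l, j l = w :=
    ⟨eL ⟨w, (D.shift_d_eq_zero_iff w).mp hw⟩, congrArg Subtype.val (eL.symm_apply_apply _)⟩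
  obtain ⟨ψ, hψ, hψ₀⟩ := ZComplex.exists_chainMap_extending hAcC hDuC hPC hAcD.shift hPD.shift
    hFD.shift (j ∘ₗ g ∘ₗ eM.toLinearMap) fun _ => hj_d _
  have hψ₀_surj (w : D.shift.P 1) (hw : D.shift.d 1 w = 0) : ∃ c, C.d 0 c = 0 ∧ ψ 0 c = w := by
    obtain ⟨l, rfl⟩ := hj_surj w hw
    obtain ⟨m, rfl⟩ := hg l
    exact ⟨(eM.symm m).1, (eM.symm m).2, by simp [hψ₀ _ (eM.symm m).2]⟩
  have hj : Function.Injective j := Subtype.val_injective.comp eL.symm.injective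
  obtain ⟨e⟩ := ZComplex.nonempty_linearEquiv_ker_cone ψ hψ hf hfg eM hj hψ₀
  have := hPD.shift 0
  have := hFD.shift 0
  exact (ZComplex.isGProj_ker_prod (hPC.cone ψ hψ hPD.shift) (hFC.cone ψ hψ hFD.shift)
    (hAcC.cone ψ hψ hAcD.shift) (hDuC.cone ψ hψ hDuD.shift) (LinearMap.snd A _ _)
    (ZComplex.exists_cone_cocycle_snd_eq ψ hψ hψ₀_surj)).of_linearEquiv e.symm
end
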